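/- arXiv:math/0411435 — 3 statements merged into one kernel-verified Lean document; each statement's English description precedes it below -/
import Mathlib

section
/- Let Γ be a group with a finite generating set S and word metric d_S, and let ε ∈ (0,1) and N ≥ 1. Suppose that for every x ∈ Γ and every R > 0 the ball of radius R centered at x in (Γ, d_S) can be covered by at most N balls of radius εR. Then for all R ≥ 1 one has gr(R) ≤ N · gr(1) · R^{log N / log(1/ε)}. -/
/-- The word length of `g` with respect to the generating set `S`: the least `n` such that
`g` is a product of `n` elements of `S ∪ S⁻¹`. -/
noncomputable def wordLength {G : Type*} [Group G] (S : Set G) (g : G) : ℕ :=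
  sInf {n : ℕ | ∃ f : Fin n → G, (∀ i, f i ∈ S ∨ (f i)⁻¹ ∈ S) ∧ (List.ofFn f).prod = g}

/-- The word metric `d_S(g,h) = |g⁻¹h|_S`. -/
noncomputable def wordDist {G : Type*} [Group G] (S : Set G) (g h : G) : ℕ :=
  wordLength S (g⁻¹ * h)

/-- The growth function `gr(R) = card {g : |g|_S ≤ R}`. -/
noncomputable def growth {G : Type*} [Group G] (S : Set G) (R : ℝ) : ℕ :=
  Set.ncard {g : G | (wordLength S g : ℝ) ≤ R}

section aux
variable {G : Type*} [Group G]

lemma wordLength_set_nonempty (S : Finset G) (hgen : Subgroup.closure (S : Set G) = ⊤) (g : G) :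
    {n : ℕ | ∃ f : Fin n → G, (∀ i, f i ∈ (S : Set G) ∨ (f i)⁻¹ ∈ (S : Set G)) ∧
      (List.ofFn f).prod = g}.Nonempty := by
  have hg : g ∈ Submonoid.closure ((S : Set G) ∪ (S : Set G)⁻¹) := by
    rw [← Subgroup.closure_toSubmonoid, hgen]; trivial
  obtain ⟨l, hl, hprod⟩ := Submonoid.exists_list_of_mem_closure hg
  refine ⟨l.length, fun i => l.get i, fun i => ?_, by simp [List.ofFn_get, hprod]⟩
  have := hl (l.get i) (List.get_mem l i)
  rcases this with h | h
  · exact Or.inl h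
  · exact Or.inr (Set.mem_inv.mp h)

lemma ball_finite (S : Finset G) (hgen : Subgroup.closure (S : Set G) = ⊤) (R : ℝ) :
    {g : G | (wordLength (S : Set G) g : ℝ) ≤ R}.Finite := by
  rcases lt_or_ge R 0 with hR | hR
  · convert Set.finite_empty
    ext g
    simp only [Set.mem_setOf_eq, Set.mem_empty_iff_false, iff_false, not_le]
    exact lt_of_lt_of_le hR (by positivity)
  set n : ℕ := ⌊R⌋₊ with hn
  have key : {g : G | (wordLength (S : Set G) g : ℝ) ≤ R} ⊆
      ⋃ m ∈ Finset.range (n + 1),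
        (fun f : Fin m → G => (List.ofFn f).prod) ''
          {f : Fin m → G | ∀ i, f i ∈ ((S : Set G) ∪ (S : Set G)⁻¹)} := by
    intro g hg
    have h1 : wordLength (S : Set G) g ≤ n := Nat.le_floor (by exact_mod_cast hg)
    have h2 := Nat.sInf_mem (wordLength_set_nonempty S hgen g)
    obtain ⟨f, hf, hprod⟩ := h2
    refine Set.mem_iUnion₂.mpr ⟨wordLength (S : Set G) g, Finset.mem_range.mpr (by omega),
      ⟨f, fun i => ?_, hprod⟩⟩
    rcases hf i with h | h
    · exact Or.inl h
    · exact Or.inr (Set.mem_inv.mpr h)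
  refine Set.Finite.subset ?_ key
  refine Set.Finite.biUnion (Finset.range (n + 1)).finite_toSet fun m _ => ?_
  refine Set.Finite.image _ (Set.Finite.pi' fun i => ?_)
  exact Set.Finite.union S.finite_toSet (S.finite_toSet.inv)

lemma ball_eq_smul (S : Finset G) (x : G) (r : ℝ) :
    {g : G | (wordDist (S : Set G) x g : ℝ) ≤ r} =
      (fun h => x * h) '' {g : G | (wordLength (S : Set G) g : ℝ) ≤ r} := by
  ext g
  simp only [Set.mem_setOf_eq, Set.mem_image, wordDist]
  constructor
  · intro h; exact ⟨x⁻¹ * g, h, by group⟩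
  · rintro ⟨h, hh, rfl⟩; simpa using hh

lemma ncard_ball (S : Finset G) (x : G) (r : ℝ) :
    Set.ncard {g : G | (wordDist (S : Set G) x g : ℝ) ≤ r} = growth (S : Set G) r := by
  rw [ball_eq_smul, growth, Set.ncard_image_of_injective _ (mul_right_injective x)]

lemma growth_mono (S : Finset G) (hgen : Subgroup.closure (S : Set G) = ⊤) {r r' : ℝ}
    (h : r ≤ r') : growth (S : Set G) r ≤ growth (S : Set G) r' :=
  Set.ncard_le_ncard (fun g hg => le_trans hg h) (ball_finite S hgen r')
end aux

lemma growth_step {G : Type*} [Group G] (S : Finset G)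
    (hgen : Subgroup.closure (S : Set G) = ⊤) {ε : ℝ} {N : ℕ}
    (hcov : ∀ (x : G) (R : ℝ), 0 < R →
      ∃ C : Finset G, C.card ≤ N ∧
        ∀ g : G, (wordDist (S : Set G) x g : ℝ) ≤ R →
          ∃ c ∈ C, (wordDist (S : Set G) c g : ℝ) ≤ ε * R)
    (R : ℝ) (hR : 0 < R) :
    growth (S : Set G) R ≤ N * growth (S : Set G) (ε * R) := by
  classical
  obtain ⟨C, hC, hcover⟩ := hcov 1 R hR
  have hfin : ∀ c : G, {g : G | (wordDist (S : Set G) c g : ℝ) ≤ ε * R}.Finite := fun c => by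
    rw [ball_eq_smul]; exact (ball_finite S hgen _).image _
  have hfinR := ball_finite S hgen R
  have hsub : hfinR.toFinset ⊆ C.biUnion (fun c => (hfin c).toFinset) := by
    intro g hg
    rw [Set.Finite.mem_toFinset] at hg
    obtain ⟨c, hc, hd⟩ := hcover g (by simpa [wordDist] using hg)
    exact Finset.mem_biUnion.mpr ⟨c, hc, (hfin c).mem_toFinset.mpr hd⟩
  calc growth (S : Set G) R = hfinR.toFinset.card := by
        rw [growth, Set.ncard_eq_toFinset_card _ hfinR]
    _ ≤ (C.biUnion fun c => (hfin c).toFinset).card := Finset.card_le_card hsub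
    _ ≤ ∑ c ∈ C, ((hfin c).toFinset).card := Finset.card_biUnion_le
    _ = ∑ c ∈ C, growth (S : Set G) (ε * R) := by
        refine Finset.sum_congr rfl fun c _ => ?_
        rw [← Set.ncard_eq_toFinset_card _ (hfin c), ncard_ball]
    _ = C.card * growth (S : Set G) (ε * R) := by rw [Finset.sum_const, smul_eq_mul]
    _ ≤ N * growth (S : Set G) (ε * R) := Nat.mul_le_mul_right _ hC

lemma growth_iter {G : Type*} [Group G] (S : Finset G)
    (hgen : Subgroup.closure (S : Set G) = ⊤) {ε : ℝ} (hε0 : 0 < ε) {N : ℕ}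
    (hcov : ∀ (x : G) (R : ℝ), 0 < R →
      ∃ C : Finset G, C.card ≤ N ∧
        ∀ g : G, (wordDist (S : Set G) x g : ℝ) ≤ R →
          ∃ c ∈ C, (wordDist (S : Set G) c g : ℝ) ≤ ε * R) :
    ∀ (k : ℕ) (R : ℝ), 0 < R →
      growth (S : Set G) R ≤ N ^ k * growth (S : Set G) (ε ^ k * R) := by
  intro k
  induction k with
  | zero => intro R hR; simp
  | succ k ih =>
    intro R hR
    calc growth (S : Set G) R ≤ N * growth (S : Set G) (ε * R) :=
          growth_step S hgen hcov R hR
      _ ≤ N * (N ^ k * growth (S : Set G) (ε ^ k * (ε * R))) :=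
          Nat.mul_le_mul_left _ (ih (ε * R) (by positivity))
      _ = N ^ (k + 1) * growth (S : Set G) (ε ^ (k + 1) * R) := by
          rw [← mul_assoc, ← pow_succ']
          congr 2
          rw [pow_succ]
          ring

/-- Quantitative forward direction of Lemma 1.1: if every ball of radius `R` of the word
metric can be covered by at most `N` balls of radius `εR`, then
`gr(R) ≤ N · gr(1) · R^(log N / log (1/ε))` for all `R ≥ 1`. -/
theorem growth_le_of_covering {G : Type*} [Group G] (S : Finset G)
    (hgen : Subgroup.closure (S : Set G) = ⊤)
    (ε : ℝ) (hε0 : 0 < ε) (hε1 : ε < 1) (N : ℕ) (hN : 1 ≤ N)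
    (hcov : ∀ (x : G) (R : ℝ), 0 < R →
      ∃ C : Finset G, C.card ≤ N ∧
        ∀ g : G, (wordDist (S : Set G) x g : ℝ) ≤ R →
          ∃ c ∈ C, (wordDist (S : Set G) c g : ℝ) ≤ ε * R) :
    ∀ R : ℝ, 1 ≤ R →
      (growth (S : Set G) R : ℝ) ≤
        (N : ℝ) * (growth (S : Set G) 1 : ℝ) * R ^ (Real.log N / Real.log (1 / ε)) := by
  intro R hR
  have hR0 : 0 < R := lt_of_lt_of_le one_pos hR
  set L := Real.log (1 / ε) with hL
  have hL0 : 0 < L := Real.log_pos (by rw [lt_div_iff₀ hε0]; linarith)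
  have hlogR : 0 ≤ Real.log R := Real.log_nonneg hR
  set k := ⌈Real.log R / L⌉₊ with hk
  have hkge : Real.log R / L ≤ (k : ℝ) := Nat.le_ceil _
  have hεk : ε ^ k * R ≤ 1 := by
    have h1 : Real.log R ≤ (k : ℝ) * L := by
      rw [div_le_iff₀ hL0] at hkge; linarith
    have h2 : R ≤ (1 / ε) ^ k := by
      have h3 := Real.exp_le_exp.mpr h1
      rw [Real.exp_log hR0] at h3
      calc R ≤ Real.exp ((k : ℝ) * L) := h3
        _ = (1 / ε) ^ k := by
          rw [hL, Real.exp_nat_mul, Real.exp_log (by positivity : (0:ℝ) < 1 / ε)]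
    calc ε ^ k * R ≤ ε ^ k * (1 / ε) ^ k :=
          mul_le_mul_of_nonneg_left h2 (pow_nonneg hε0.le _)
      _ = 1 := by rw [← mul_pow, mul_one_div, div_self hε0.ne', one_pow]
  have hnat : growth (S : Set G) R ≤ N ^ k * growth (S : Set G) 1 :=
    calc growth (S : Set G) R ≤ N ^ k * growth (S : Set G) (ε ^ k * R) :=
          growth_iter S hgen hε0 hcov k R hR0
      _ ≤ N ^ k * growth (S : Set G) 1 :=
          Nat.mul_le_mul_left _ (growth_mono S hgen hεk)
  have hN0 : (0 : ℝ) < (N : ℝ) := by exact_mod_cast hN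
  have hlogN : 0 ≤ Real.log N := Real.log_nonneg (by exact_mod_cast hN)
  have hNk : ((N : ℝ)) ^ k ≤ (N : ℝ) * R ^ (Real.log N / L) := by
    have hklt : (k : ℝ) ≤ Real.log R / L + 1 :=
      le_of_lt (Nat.ceil_lt_add_one (by positivity))
    calc ((N : ℝ)) ^ k = Real.exp ((k : ℝ) * Real.log N) := by
          rw [Real.exp_nat_mul, Real.exp_log hN0]
      _ ≤ Real.exp ((Real.log R / L + 1) * Real.log N) :=
          Real.exp_le_exp.mpr (mul_le_mul_of_nonneg_right hklt hlogN)
      _ = Real.exp (Real.log N) * Real.exp (Real.log R * (Real.log N / L)) := by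
          rw [← Real.exp_add]; ring_nf
      _ = (N : ℝ) * R ^ (Real.log N / L) := by
          rw [Real.exp_log hN0, Real.rpow_def_of_pos hR0]
  calc (growth (S : Set G) R : ℝ) ≤ ((N : ℝ)) ^ k * (growth (S : Set G) 1 : ℝ) := by
        exact_mod_cast hnat
    _ ≤ ((N : ℝ) * R ^ (Real.log N / L)) * (growth (S : Set G) 1 : ℝ) :=
        mul_le_mul_of_nonneg_right hNk (by positivity)
    _ = (N : ℝ) * (growth (S : Set G) 1 : ℝ) * R ^ (Real.log N / L) := by ring
end

section
/- Let (X, d) be a metric space in which every two points are joined by a geodesic: for all x, y ∈ X there exists γ : [0, d(x,y)] → X with γ(0) = x, γ(d(x,y)) = y, and d(γ(s), γ(t)) = |s − t| for all s, t ∈ [0, d(x,y)]. Let N ≥ 1 be such that every closed ball of radius 2 in X can be covered by at most N closed balls of radius 1. Then for every x₀ ∈ X and every R ≥ 1, the closed ball B(x₀, R) can be covered by at most N^{⌈R⌉} closed balls of radius 1. -/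
/-- Exponential covering bound for geodesic spaces of bounded geometry: if every closed
ball of radius 2 can be covered by at most `N` closed balls of radius 1, then every closed
ball of radius `R ≥ 1` can be covered by at most `N^⌈R⌉` closed balls of radius 1. -/
theorem ball_covered_by_exp_many_unit_balls {X : Type*} [MetricSpace X]
    (hgeo : ∀ x y : X, ∃ γ : ℝ → X, γ 0 = x ∧ γ (dist x y) = y ∧
      ∀ s ∈ Set.Icc (0 : ℝ) (dist x y), ∀ t ∈ Set.Icc (0 : ℝ) (dist x y),
        dist (γ s) (γ t) = |s - t|)
    (N : ℕ) (hN : 1 ≤ N)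
    (hcov : ∀ x : X, ∃ C : Finset X, C.card ≤ N ∧
      Metric.closedBall x 2 ⊆ ⋃ c ∈ C, Metric.closedBall c 1)
    (x₀ : X) (R : ℝ) (hR : 1 ≤ R) :
    ∃ C : Finset X, C.card ≤ N ^ ⌈R⌉₊ ∧
      Metric.closedBall x₀ R ⊆ ⋃ c ∈ C, Metric.closedBall c 1 := by
  classical
  have key : ∀ n : ℕ, ∃ C : Finset X, C.card ≤ N ^ (n + 1) ∧
      Metric.closedBall x₀ ((n : ℝ) + 1) ⊆ ⋃ c ∈ C, Metric.closedBall c 1 := by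
    intro n
    induction n with
    | zero =>
      obtain ⟨C, hC, hsub⟩ := hcov x₀
      refine ⟨C, by simpa using hC, fun y hy => hsub ?_⟩
      simp only [Metric.mem_closedBall] at *
      push_cast at hy
      linarith
    | succ n ih =>
      obtain ⟨C, hCcard, hCsub⟩ := ih
      choose D hDcard hDsub using hcov
      refine ⟨C.biUnion fun c => D c, ?_, ?_⟩
      · calc (C.biUnion fun c => D c).card ≤ ∑ c ∈ C, (D c).card := Finset.card_biUnion_le
          _ ≤ ∑ _c ∈ C, N := Finset.sum_le_sum fun c _ => hDcard c
          _ = C.card * N := by rw [Finset.sum_const, smul_eq_mul]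
          _ ≤ N ^ (n + 1) * N := Nat.mul_le_mul_right _ hCcard
          _ = N ^ (n + 1 + 1) := by ring
      · intro y hy
        simp only [Metric.mem_closedBall] at hy
        rw [dist_comm] at hy
        push_cast at hy
        obtain ⟨γ, hγ0, hγd, hγiso⟩ := hgeo x₀ y
        set d := dist x₀ y with hd
        have hd0 : 0 ≤ d := dist_nonneg
        set t := max 0 (d - 1) with ht
        have ht0 : 0 ≤ t := le_max_left _ _
        have htd : t ≤ d := max_le hd0 (by linarith)
        have hmem : t ∈ Set.Icc (0 : ℝ) d := ⟨ht0, htd⟩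
        have h0mem : (0 : ℝ) ∈ Set.Icc (0 : ℝ) d := ⟨le_refl _, hd0⟩
        have hdmem : d ∈ Set.Icc (0 : ℝ) d := ⟨hd0, le_refl _⟩
        have hxz : dist x₀ (γ t) = t := by
          have h := hγiso 0 h0mem t hmem
          rw [hγ0] at h
          rw [h, abs_of_nonpos (by linarith)]
          ring
        have hzy : dist (γ t) y ≤ 1 := by
          have h := hγiso t hmem d hdmem
          rw [hγd] at h
          rw [h, abs_of_nonpos (by linarith)]
          have : d - 1 ≤ t := le_max_right _ _
          linarith
        have hzmem : γ t ∈ Metric.closedBall x₀ ((n : ℝ) + 1) := by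
          rw [Metric.mem_closedBall, dist_comm, hxz]
          have h1 : d - 1 ≤ (n : ℝ) + 1 := by linarith
          have h0 : (0 : ℝ) ≤ (n : ℝ) + 1 := by positivity
          exact max_le h0 h1
        obtain ⟨c, hcC, hcz⟩ := by
          have := hCsub hzmem
          simpa only [Set.mem_iUnion, Metric.mem_closedBall, exists_prop] using this
        have hy2 : y ∈ Metric.closedBall c 2 := by
          simp only [Metric.mem_closedBall]
          calc dist y c ≤ dist y (γ t) + dist (γ t) c := dist_triangle _ _ _
            _ ≤ 1 + 1 := add_le_add (by rwa [dist_comm]) hcz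
            _ = 2 := by norm_num
        have := hDsub c hy2
        simp only [Set.mem_iUnion, Metric.mem_closedBall, exists_prop] at this ⊢
        obtain ⟨e, heD, hey⟩ := this
        exact ⟨e, Finset.mem_biUnion.2 ⟨c, hcC, heD⟩, hey⟩
  have hceil : 1 ≤ ⌈R⌉₊ := Nat.one_le_ceil_iff.2 (by linarith)
  obtain ⟨m, hm⟩ : ∃ m, ⌈R⌉₊ = m + 1 := ⟨⌈R⌉₊ - 1, (Nat.succ_pred_eq_of_pos hceil).symm⟩
  obtain ⟨C, hCcard, hCsub⟩ := key m
  refine ⟨C, by rwa [hm], fun y hy => hCsub ?_⟩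
  simp only [Metric.mem_closedBall] at hy ⊢
  have : R ≤ ((m : ℝ) + 1) := by
    have := Nat.le_ceil R
    rw [hm] at this
    push_cast at this
    linarith
  linarith
end

section
/- Let (X, d) be a metric space in which every two points are joined by a geodesic: for all x, y ∈ X there exists γ : [0, d(x,y)] → X with γ(0) = x, γ(d(x,y)) = y, and d(γ(s), γ(t)) = |s − t| for all s, t ∈ [0, d(x,y)]. Let N ≥ 1 be such that every closed ball of radius 2 in X can be covered by at most N closed balls of radius 1. Then for every x₀ ∈ X and every R ≥ 1, any subset of the closed ball B(x₀, R) whose points are pairwise at distance greater than 2 has cardinality at most N^{⌈R⌉}. -/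
/-- Covering lemma: under the hypotheses, a closed ball of radius `R ≤ n` can be covered
by at most `N ^ n` closed balls of radius 1. -/
lemma closedBall_covered {X : Type*} [MetricSpace X]
    (hgeo : ∀ x y : X, ∃ γ : ℝ → X, γ 0 = x ∧ γ (dist x y) = y ∧
      ∀ s ∈ Set.Icc (0 : ℝ) (dist x y), ∀ t ∈ Set.Icc (0 : ℝ) (dist x y),
        dist (γ s) (γ t) = |s - t|)
    (N : ℕ) (hN : 1 ≤ N)
    (hcov : ∀ x : X, ∃ C : Finset X, C.card ≤ N ∧
      Metric.closedBall x 2 ⊆ ⋃ c ∈ C, Metric.closedBall c 1)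
    (x₀ : X) :
    ∀ n : ℕ, ∀ R : ℝ, R ≤ n →
      ∃ D : Finset X, D.card ≤ N ^ n ∧
        Metric.closedBall x₀ R ⊆ ⋃ c ∈ D, Metric.closedBall c 1 := by
  intro n
  induction n with
  | zero =>
    intro R hRn
    refine ⟨{x₀}, by simp, ?_⟩
    intro x hx
    simp only [Finset.mem_singleton, Set.mem_iUnion, Set.iUnion_iUnion_eq_left]
    have h0 : R ≤ 0 := by exact_mod_cast hRn
    exact Metric.closedBall_subset_closedBall (by linarith) hx
  | succ n ih =>
    intro R hRn
    by_cases hR1 : R ≤ 1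
    · refine ⟨{x₀}, ?_, ?_⟩
      · simpa using Nat.one_le_pow (n + 1) N hN
      · intro x hx
        simp only [Finset.mem_singleton, Set.mem_iUnion, Set.iUnion_iUnion_eq_left]
        exact Metric.closedBall_subset_closedBall hR1 hx
    · push_neg at hR1
      obtain ⟨D', hD'card, hD'cov⟩ := ih (R - 1) (by push_cast at hRn ⊢; linarith)
      -- choose covers for each point of D'
      classical
      choose C hCcard hCcov using hcov
      refine ⟨D'.biUnion (fun c => C c), ?_, ?_⟩
      · calc (D'.biUnion (fun c => C c)).card ≤ ∑ c ∈ D', (C c).card :=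
              Finset.card_biUnion_le
          _ ≤ ∑ _c ∈ D', N := Finset.sum_le_sum (fun c _ => hCcard c)
          _ = D'.card * N := by simp [Finset.sum_const, Nat.smul_one_eq_cast]
          _ ≤ N ^ n * N := Nat.mul_le_mul_right _ hD'card
          _ = N ^ (n + 1) := by ring
      · intro x hx
        simp only [Metric.mem_closedBall] at hx
        -- find u with dist x₀ u ≤ R - 1 and dist u x ≤ 1
        have hkey : ∃ u : X, dist x₀ u ≤ R - 1 ∧ dist u x ≤ 1 := by
          by_cases hd : dist x₀ x ≤ R - 1
          · exact ⟨x, hd, by simp⟩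
          · push_neg at hd
            obtain ⟨γ, hγ0, hγd, hγiso⟩ := hgeo x₀ x
            refine ⟨γ (R - 1), ?_, ?_⟩
            · have := hγiso 0 ⟨le_refl _, dist_nonneg⟩ (R - 1)
                ⟨by linarith, le_of_lt hd⟩
              rw [hγ0] at this
              rw [this]
              rw [abs_of_nonpos (by linarith)]
              linarith
            · have := hγiso (R - 1) ⟨by linarith, le_of_lt hd⟩ (dist x₀ x)
                ⟨dist_nonneg, le_refl _⟩
              rw [hγd] at this
              rw [this, abs_of_nonpos (by linarith)]
              linarith [dist_comm x₀ x]
        obtain ⟨u, hu1, hu2⟩ := hkey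
        have hu : u ∈ Metric.closedBall x₀ (R - 1) := Metric.mem_closedBall.mpr (by rw [dist_comm]; exact hu1)
        obtain ⟨s, hs⟩ := Set.mem_iUnion.mp (hD'cov hu)
        simp only [Set.mem_iUnion, Metric.mem_closedBall] at hs
        obtain ⟨hsD', hus⟩ := hs
        have hx2 : x ∈ Metric.closedBall s 2 := by
          simp only [Metric.mem_closedBall]
          calc dist x s ≤ dist x u + dist u s := dist_triangle _ _ _
            _ ≤ 1 + 1 := add_le_add (by rw [dist_comm]; exact hu2) hus
            _ = 2 := by norm_num
        obtain ⟨c, hc⟩ := Set.mem_iUnion.mp (hCcov s hx2)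
        simp only [Set.mem_iUnion] at hc
        obtain ⟨hcC, hxc⟩ := hc
        exact Set.mem_iUnion.mpr ⟨c, Set.mem_iUnion.mpr
          ⟨Finset.mem_biUnion.mpr ⟨s, hsD', hcC⟩, hxc⟩⟩

/-- Exponential bound on separated sets in geodesic spaces of bounded geometry: if every
closed ball of radius 2 can be covered by at most `N` closed balls of radius 1, then any
subset of a closed ball of radius `R ≥ 1` whose points are pairwise at distance `> 2` has
cardinality at most `N^⌈R⌉`. -/
theorem separated_subset_card_le {X : Type*} [MetricSpace X]
    (hgeo : ∀ x y : X, ∃ γ : ℝ → X, γ 0 = x ∧ γ (dist x y) = y ∧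
      ∀ s ∈ Set.Icc (0 : ℝ) (dist x y), ∀ t ∈ Set.Icc (0 : ℝ) (dist x y),
        dist (γ s) (γ t) = |s - t|)
    (N : ℕ) (hN : 1 ≤ N)
    (hcov : ∀ x : X, ∃ C : Finset X, C.card ≤ N ∧
      Metric.closedBall x 2 ⊆ ⋃ c ∈ C, Metric.closedBall c 1)
    (x₀ : X) (R : ℝ) (hR : 1 ≤ R)
    (T : Set X) (hT : T ⊆ Metric.closedBall x₀ R)
    (hsep : T.Pairwise fun a b => 2 < dist a b) :
    T.Finite ∧ T.ncard ≤ N ^ ⌈R⌉₊ := by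
  obtain ⟨D, hDcard, hDcov⟩ := closedBall_covered hgeo N hN hcov x₀ ⌈R⌉₊ R (Nat.le_ceil R)
  -- each point of T lies in some unit ball centered in D
  have hchoice : ∀ t : T, ∃ c : X, c ∈ D ∧ dist (t : X) c ≤ 1 := by
    rintro ⟨t, ht⟩
    obtain ⟨c, hc⟩ := Set.mem_iUnion.mp (hDcov (hT ht))
    simp only [Set.mem_iUnion, Metric.mem_closedBall] at hc
    exact ⟨c, hc.1, hc.2⟩
  choose f hfD hf using hchoice
  -- f is injective: two points of T in the same unit ball would be at distance ≤ 2
  have hinj : Function.Injective f := by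
    rintro ⟨a, ha⟩ ⟨b, hb⟩ hab
    simp only [Subtype.mk.injEq]
    by_contra hne'
    have h2 : 2 < dist a b := hsep ha hb hne'
    have : dist a b ≤ 2 := by
      calc dist a b ≤ dist a (f ⟨a, ha⟩) + dist (f ⟨a, ha⟩) b :=
            dist_triangle _ _ _
        _ ≤ 1 + 1 := add_le_add (hf ⟨a, ha⟩)
            (by rw [hab, dist_comm]; exact hf ⟨b, hb⟩)
        _ = 2 := by norm_num
    linarith
  -- map into the finite set D
  let g : T → (D : Set X) := fun t => ⟨f t, hfD t⟩
  have hginj : Function.Injective g := fun a b h =>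
    hinj (by simpa [g] using congrArg Subtype.val h)
  have hDfin : Finite (D : Set X) := Set.Finite.to_subtype D.finite_toSet
  have hfin : T.Finite := Set.finite_coe_iff.mp (Finite.of_injective g hginj)
  refine ⟨hfin, ?_⟩
  have : Nat.card T ≤ Nat.card (D : Set X) :=
    Nat.card_le_card_of_injective g hginj
  calc T.ncard = Nat.card T := rfl
    _ ≤ Nat.card (D : Set X) := this
    _ = D.card := by rw [Nat.card_coe_set_eq, Set.ncard_coe_finset]
    _ ≤ N ^ ⌈R⌉₊ := hDcard
end
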